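/- arXiv:2503.08465 — 4 statements merged into one kernel-verified Lean document; each statement's English description precedes it below -/
import Mathlib

section
/- Let H be a real inner product space and let X, Y ⊆ H be finite-dimensional subspaces with dim X = dim Y. Define dist(X, Y) = sup over x ∈ X with ‖x‖ = 1 of inf over w ∈ Y of ‖x − w‖. Then dist(X, Y) = dist(Y, X). -/
/-!
Write `P_X`, `P_Y` for the orthogonal projections. For a unit vector `x`,
`inf_{w ∈ Y} ‖x - w‖ = ‖x - P_Y x‖ = √(1 - ‖P_Y x‖²)`, so it suffices to find, for every unit
`y ∈ Y`, a unit `x ∈ X` with `‖P_Y x‖ ≤ ‖P_X y‖`. If `P_Y` kills a unit vector of `X`, take it.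
Otherwise `P_Y : X → Y` is injective, hence onto since `dim X = dim Y`, and some `x ∈ X` has
`P_Y x = y`; then `1 = ⟪P_Y x, y⟫ = ⟪x, y⟫ = ⟪x, P_X y⟫ ≤ ‖x‖ ‖P_X y‖`, so `x / ‖x‖` works.
-/

open RealInnerProductSpace

namespace Submodule

variable {H : Type*} [NormedAddCommGroup H] [InnerProductSpace ℝ H]

noncomputable def directedGap (X Y : Submodule ℝ H) : ℝ :=
  sSup {r : ℝ | ∃ x ∈ X, ‖x‖ = 1 ∧ r = sInf {s : ℝ | ∃ w ∈ Y, s = ‖x - w‖}}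

section Projection

variable (Y : Submodule ℝ H) [Y.HasOrthogonalProjection] (x : H)

lemma sInf_norm_sub_eq_norm_sub_starProjection :
    sInf {s : ℝ | ∃ w ∈ Y, s = ‖x - w‖} = ‖x - Y.starProjection x‖ := by
  rw [starProjection_minimal, iInf]
  congr 1
  ext s
  simp [eq_comm]

lemma norm_sub_starProjection_sq :
    ‖x - Y.starProjection x‖ ^ 2 = ‖x‖ ^ 2 - ‖Y.starProjection x‖ ^ 2 := by
  rw [norm_sq_eq_add_norm_sq_starProjection x Y, starProjection_orthogonal_val]
  ring

lemma norm_sub_starProjection_le : ‖x - Y.starProjection x‖ ≤ ‖x‖ := by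
  simpa using Yᗮ.norm_starProjection_apply_le x

end Projection

lemma norm_starProjection_sq_le_norm_mul {X Y : Submodule ℝ H} [X.HasOrthogonalProjection]
    [Y.HasOrthogonalProjection] {x : H} (hx : x ∈ X) :
    ‖Y.starProjection x‖ ^ 2 ≤ ‖x‖ * ‖X.starProjection (Y.starProjection x)‖ :=
  calc ‖Y.starProjection x‖ ^ 2 = ⟪Y.starProjection x, Y.starProjection x⟫ :=
        (real_inner_self_eq_norm_sq _).symm
    _ = ⟪x, Y.starProjection x⟫ := by
        rw [inner_starProjection_left_eq_right,
          starProjection_eq_self_iff.mpr (Y.starProjection_apply_mem x)]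
    _ = ⟪x, X.starProjection (Y.starProjection x)⟫ := by
        rw [← X.inner_starProjection_left_eq_right, starProjection_eq_self_iff.mpr hx]
    _ ≤ ‖x‖ * ‖X.starProjection (Y.starProjection x)‖ := real_inner_le_norm _ _

section FiniteDimensional

variable {X Y : Submodule ℝ H} [FiniteDimensional ℝ X] [FiniteDimensional ℝ Y]

lemma exists_ne_zero_norm_starProjection_le (hdim : Module.finrank ℝ X = Module.finrank ℝ Y)
    {y : H} (hy : y ∈ Y) (hy1 : ‖y‖ = 1) :
    ∃ x ∈ X, x ≠ 0 ∧ ‖Y.starProjection x‖ ≤ ‖x‖ * ‖X.starProjection y‖ := by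
  let f : X →ₗ[ℝ] Y := Y.orthogonalProjectionOnto.toLinearMap ∘ₗ X.subtype
  by_cases hf : Function.Injective f
  · obtain ⟨⟨x, hx⟩, hfx⟩ := (LinearMap.injective_iff_surjective_of_finrank_eq_finrank hdim).1 hf
      ⟨y, hy⟩
    have hPx : Y.starProjection x = y := congrArg Subtype.val hfx
    refine ⟨x, hx, ?_, ?_⟩
    · rintro rfl
      simp [← hPx] at hy1
    · simpa [hPx, hy1] using norm_starProjection_sq_le_norm_mul (Y := Y) hx
  · obtain ⟨⟨x, hx⟩, hfx, hx0⟩ : ∃ a, f a = 0 ∧ a ≠ 0 := by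
      simpa [injective_iff_map_eq_zero] using hf
    have hPx : Y.starProjection x = 0 := congrArg Subtype.val hfx
    exact ⟨x, hx, fun h => hx0 (Subtype.ext h), by rw [hPx, norm_zero]; positivity⟩

lemma exists_norm_eq_one_norm_starProjection_le (hdim : Module.finrank ℝ X = Module.finrank ℝ Y)
    {y : H} (hy : y ∈ Y) (hy1 : ‖y‖ = 1) :
    ∃ x ∈ X, ‖x‖ = 1 ∧ ‖Y.starProjection x‖ ≤ ‖X.starProjection y‖ := by
  obtain ⟨x, hx, hx0, hle⟩ := exists_ne_zero_norm_starProjection_le hdim hy hy1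
  refine ⟨(‖x‖⁻¹ : ℝ) • x, X.smul_mem _ hx, norm_smul_inv_norm hx0, ?_⟩
  rwa [map_smul, norm_smul, norm_inv, norm_norm, inv_mul_le_iff₀ (norm_pos_iff.2 hx0)]

lemma exists_norm_eq_one_norm_sub_starProjection_le
    (hdim : Module.finrank ℝ X = Module.finrank ℝ Y) {y : H} (hy : y ∈ Y) (hy1 : ‖y‖ = 1) :
    ∃ x ∈ X, ‖x‖ = 1 ∧ ‖y - X.starProjection y‖ ≤ ‖x - Y.starProjection x‖ := by
  obtain ⟨x, hx, hx1, hle⟩ := exists_norm_eq_one_norm_starProjection_le hdim hy hy1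
  refine ⟨x, hx, hx1, (pow_le_pow_iff_left₀ (norm_nonneg _) (norm_nonneg _) two_ne_zero).1 ?_⟩
  rw [norm_sub_starProjection_sq, norm_sub_starProjection_sq, hx1, hy1]
  gcongr

lemma directedGap_le_directedGap (hdim : Module.finrank ℝ X = Module.finrank ℝ Y) :
    directedGap Y X ≤ directedGap X Y := by
  simp only [directedGap, sInf_norm_sub_eq_norm_sub_starProjection]
  have hbdd : BddAbove {r : ℝ | ∃ x ∈ X, ‖x‖ = 1 ∧ r = ‖x - Y.starProjection x‖} := by
    refine ⟨1, ?_⟩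
    rintro _ ⟨x, -, hx1, rfl⟩
    exact hx1 ▸ Y.norm_sub_starProjection_le x
  refine Real.sSup_le ?_ (Real.sSup_nonneg ?_)
  · rintro _ ⟨y, hy, hy1, rfl⟩
    obtain ⟨x, hx, hx1, hle⟩ := exists_norm_eq_one_norm_sub_starProjection_le hdim hy hy1
    exact hle.trans (le_csSup hbdd ⟨x, hx, hx1, rfl⟩)
  · rintro _ ⟨x, -, -, rfl⟩
    exact norm_nonneg _

end FiniteDimensional

end Submodule

/-- For finite-dimensional subspaces `X, Y` of a real inner product
space with `dim X = dim Y`, the (one-sided) distance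
`dist(X,Y) = sup_{x ∈ X, ‖x‖=1} inf_{w ∈ Y} ‖x - w‖` is symmetric. -/
theorem stmt_0 {H : Type*} [NormedAddCommGroup H] [InnerProductSpace ℝ H]
    (X Y : Submodule ℝ H) [FiniteDimensional ℝ X] [FiniteDimensional ℝ Y]
    (hdim : Module.finrank ℝ X = Module.finrank ℝ Y) :
    sSup {r : ℝ | ∃ x ∈ X, ‖x‖ = 1 ∧ r = sInf {s : ℝ | ∃ w ∈ Y, s = ‖x - w‖}} =
      sSup {r : ℝ | ∃ y ∈ Y, ‖y‖ = 1 ∧ r = sInf {s : ℝ | ∃ w ∈ X, s = ‖y - w‖}} :=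
  le_antisymm (Submodule.directedGap_le_directedGap hdim.symm)
    (Submodule.directedGap_le_directedGap hdim)
end

section
/- Let M ∈ ℝ^{n×n} be symmetric positive definite and let A : S → ℝ^{n×n} be spectrally equivalent to a symmetric positive definite matrix Ā with constants 0 < α ≤ β. Fix i ∈ {1,…,n−1} and set δ₀ = (λ_{i+1}(Ā,M) − λ_i(Ā,M))/λ_i(Ā,M). If δ₀ > (β − α)/α, then δ := (α δ₀ + (α − β))/β > 0 and for every σ ∈ S, (λ_{i+1}(A(σ),M) − λ_i(A(σ),M))/λ_i(A(σ),M) ≥ δ. -/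
/-!
Spectral equivalence `α Ā ≤ A(σ) ≤ β Ā` compares Rayleigh quotients pointwise, and the
min-max values are monotone in the Rayleigh quotient and positively homogeneous in `A`; hence
`α λ_j(Ā,M) ≤ λ_j(A(σ),M) ≤ β λ_j(Ā,M)` for every `j`. Using the lower bound at `i + 1` and the
upper bound at `i` gives `λ_{i+1}(A(σ),M) / λ_i(A(σ),M) ≥ (α / β) (1 + δ₀)`, which is the claim.
Since `sSup`/`sInf` on `ℝ` carry junk values, the min-max formula needs bounded Rayleigh
quotients: they are homogeneous of degree `0`, so their range is the image of the compact unit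
sphere.
-/

open Matrix

/-- The `j`-th generalized eigenvalue of the pencil `(A, M)` (1-based, in
nondecreasing order, repeated by multiplicity), via the min-max formula. -/
noncomputable def lamMinMax {n : ℕ} (A M : Matrix (Fin n) (Fin n) ℝ) (j : ℕ) : ℝ :=
  sInf { r : ℝ | ∃ U : Submodule ℝ (Fin n → ℝ), Module.finrank ℝ U = j ∧
    r = sSup { q : ℝ | ∃ x ∈ U, x ≠ 0 ∧ q = (x ⬝ᵥ A.mulVec x) / (x ⬝ᵥ M.mulVec x) } }

open Metric Pointwise

section MinMax

variable {n : ℕ} {A A₁ A₂ M : Matrix (Fin n) (Fin n) ℝ}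

noncomputable def rayleigh (A M : Matrix (Fin n) (Fin n) ℝ) (x : Fin n → ℝ) : ℝ :=
  (x ⬝ᵥ A *ᵥ x) / (x ⬝ᵥ M *ᵥ x)

noncomputable def rayleighSup (A M : Matrix (Fin n) (Fin n) ℝ) (U : Submodule ℝ (Fin n → ℝ)) :
    ℝ :=
  sSup {q | ∃ x ∈ U, x ≠ 0 ∧ q = rayleigh A M x}

lemma lamMinMax_eq_sInf_rayleighSup (A M : Matrix (Fin n) (Fin n) ℝ) (j : ℕ) :
    lamMinMax A M j =
      sInf {r | ∃ U : Submodule ℝ (Fin n → ℝ), Module.finrank ℝ U = j ∧ r = rayleighSup A M U} :=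
  rfl

lemma Matrix.PosDef.dotProduct_mulVec_pos' (hA : A.PosDef) {x : Fin n → ℝ} (hx : x ≠ 0) :
    0 < x ⬝ᵥ A *ᵥ x := by
  simpa using hA.dotProduct_mulVec_pos hx

lemma rayleigh_smul_left (c : ℝ) (A M : Matrix (Fin n) (Fin n) ℝ) (x : Fin n → ℝ) :
    rayleigh (c • A) M x = c * rayleigh A M x := by
  simp only [rayleigh, smul_mulVec, dotProduct_smul, smul_eq_mul, mul_div_assoc]

lemma rayleigh_smul {t : ℝ} (ht : t ≠ 0) (A M : Matrix (Fin n) (Fin n) ℝ) (x : Fin n → ℝ) :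
    rayleigh A M (t • x) = rayleigh A M x := by
  simp only [rayleigh, mulVec_smul, smul_dotProduct, dotProduct_smul, smul_eq_mul]
  rw [← mul_assoc, ← mul_assoc, mul_div_mul_left _ _ (mul_ne_zero ht ht)]

lemma rayleigh_pos (hA : A.PosDef) (hM : M.PosDef) {x : Fin n → ℝ} (hx : x ≠ 0) :
    0 < rayleigh A M x :=
  div_pos (hA.dotProduct_mulVec_pos' hx) (hM.dotProduct_mulVec_pos' hx)

lemma continuousOn_rayleigh (A : Matrix (Fin n) (Fin n) ℝ) (hM : M.PosDef) :
    ContinuousOn (rayleigh A M) {x | x ≠ 0} :=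
  ContinuousOn.div (by fun_prop) (by fun_prop) fun _ hx => (hM.dotProduct_mulVec_pos' hx).ne'

lemma sphere_subset_ne_zero : sphere (0 : Fin n → ℝ) 1 ⊆ {x | x ≠ 0} :=
  fun _ hu => ne_zero_of_mem_unit_sphere ⟨_, hu⟩

lemma exists_mem_sphere_rayleigh_eq {x : Fin n → ℝ} (hx : x ≠ 0) :
    ∃ u ∈ sphere (0 : Fin n → ℝ) 1, rayleigh A M u = rayleigh A M x :=
  ⟨‖x‖⁻¹ • x, by simpa using norm_smul_inv_norm (𝕜 := ℝ) hx,
    rayleigh_smul (inv_ne_zero (norm_ne_zero_iff.mpr hx)) A M x⟩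

lemma exists_abs_rayleigh_le (A : Matrix (Fin n) (Fin n) ℝ) (hM : M.PosDef) :
    ∃ C, ∀ x ≠ 0, |rayleigh A M x| ≤ C := by
  obtain ⟨C, hC⟩ := (isCompact_sphere (0 : Fin n → ℝ) 1).exists_bound_of_continuousOn
    ((continuousOn_rayleigh A hM).mono sphere_subset_ne_zero)
  refine ⟨C, fun x hx => ?_⟩
  obtain ⟨u, hu, hux⟩ := exists_mem_sphere_rayleigh_eq (A := A) (M := M) hx
  simpa [← hux] using hC u hu

lemma exists_pos_le_rayleigh (hA : A.PosDef) (hM : M.PosDef) :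
    ∃ c > 0, ∀ x ≠ 0, c ≤ rayleigh A M x := by
  rcases (sphere (0 : Fin n → ℝ) 1).eq_empty_or_nonempty with hempty | hne
  · refine ⟨1, one_pos, fun x hx => ?_⟩
    obtain ⟨u, hu, -⟩ := exists_mem_sphere_rayleigh_eq (A := A) (M := M) hx
    simp [hempty] at hu
  obtain ⟨u, hu, hmin⟩ := (isCompact_sphere (0 : Fin n → ℝ) 1).exists_isMinOn hne
    ((continuousOn_rayleigh A hM).mono sphere_subset_ne_zero)
  refine ⟨rayleigh A M u, rayleigh_pos hA hM (sphere_subset_ne_zero hu), fun x hx => ?_⟩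
  obtain ⟨v, hv, hvx⟩ := exists_mem_sphere_rayleigh_eq (A := A) (M := M) hx
  exact hvx ▸ hmin hv

lemma le_rayleighSup (A : Matrix (Fin n) (Fin n) ℝ) (hM : M.PosDef)
    {U : Submodule ℝ (Fin n → ℝ)} {x : Fin n → ℝ} (hxU : x ∈ U) (hx : x ≠ 0) :
    rayleigh A M x ≤ rayleighSup A M U := by
  obtain ⟨C, hC⟩ := exists_abs_rayleigh_le A hM
  refine le_csSup ⟨C, ?_⟩ ⟨x, hxU, hx, rfl⟩
  rintro _ ⟨y, -, hy, rfl⟩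
  exact (le_abs_self _).trans (hC y hy)

lemma rayleighSup_le {U : Submodule ℝ (Fin n → ℝ)} (hU : U ≠ ⊥) {c : ℝ}
    (h : ∀ x ∈ U, x ≠ 0 → rayleigh A M x ≤ c) : rayleighSup A M U ≤ c := by
  obtain ⟨x, hxU, hx⟩ := (Submodule.ne_bot_iff U).mp hU
  refine csSup_le ⟨_, x, hxU, hx, rfl⟩ ?_
  rintro _ ⟨y, hyU, hy, rfl⟩
  exact h y hyU hy

lemma ne_bot_of_finrank_pos {U : Submodule ℝ (Fin n → ℝ)} {j : ℕ} (hj : 1 ≤ j)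
    (hU : Module.finrank ℝ U = j) : U ≠ ⊥ := by
  rintro rfl
  simp at hU
  omega

lemma exists_submodule_finrank_eq {j : ℕ} (hj : j ≤ n) :
    ∃ U : Submodule ℝ (Fin n → ℝ), Module.finrank ℝ U = j := by
  have hli : LinearIndependent ℝ (Pi.basisFun ℝ (Fin n) ∘ Fin.castLE hj) :=
    (Pi.basisFun ℝ (Fin n)).linearIndependent.comp _ (Fin.castLE_injective hj)
  exact ⟨_, (finrank_span_eq_card hli).trans (Fintype.card_fin j)⟩

lemma lamMinMax_le_rayleighSup (A : Matrix (Fin n) (Fin n) ℝ) (hM : M.PosDef) {j : ℕ}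
    (hj : 1 ≤ j) {U : Submodule ℝ (Fin n → ℝ)} (hU : Module.finrank ℝ U = j) :
    lamMinMax A M j ≤ rayleighSup A M U := by
  obtain ⟨C, hC⟩ := exists_abs_rayleigh_le A hM
  refine csInf_le ⟨-C, ?_⟩ ⟨U, hU, rfl⟩
  rintro _ ⟨V, hV, rfl⟩
  obtain ⟨x, hxV, hx⟩ := (Submodule.ne_bot_iff V).mp (ne_bot_of_finrank_pos hj hV)
  exact (neg_le_of_abs_le (hC x hx)).trans (le_rayleighSup A hM hxV hx)

lemma le_lamMinMax {j : ℕ} (hj : j ≤ n) {c : ℝ}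
    (h : ∀ U : Submodule ℝ (Fin n → ℝ), Module.finrank ℝ U = j → c ≤ rayleighSup A M U) :
    c ≤ lamMinMax A M j := by
  obtain ⟨U, hU⟩ := exists_submodule_finrank_eq hj
  refine le_csInf ⟨_, U, hU, rfl⟩ ?_
  rintro _ ⟨V, hV, rfl⟩
  exact h V hV

lemma lamMinMax_pos (hA : A.PosDef) (hM : M.PosDef) {j : ℕ} (hj1 : 1 ≤ j) (hjn : j ≤ n) :
    0 < lamMinMax A M j := by
  obtain ⟨c, hc, hcA⟩ := exists_pos_le_rayleigh hA hM
  refine hc.trans_le (le_lamMinMax hjn fun U hU => ?_)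
  obtain ⟨x, hxU, hx⟩ := (Submodule.ne_bot_iff U).mp (ne_bot_of_finrank_pos hj1 hU)
  exact (hcA x hx).trans (le_rayleighSup A hM hxU hx)

lemma lamMinMax_mono (hM : M.PosDef) (h : ∀ v, v ⬝ᵥ A₁ *ᵥ v ≤ v ⬝ᵥ A₂ *ᵥ v) {j : ℕ}
    (hj1 : 1 ≤ j) (hjn : j ≤ n) : lamMinMax A₁ M j ≤ lamMinMax A₂ M j := by
  refine le_lamMinMax hjn fun U hU => (lamMinMax_le_rayleighSup A₁ hM hj1 hU).trans ?_
  refine rayleighSup_le (ne_bot_of_finrank_pos hj1 hU) fun x hxU hx => ?_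
  exact (div_le_div_of_nonneg_right (h x) (hM.dotProduct_mulVec_pos' hx).le).trans
    (le_rayleighSup A₂ hM hxU hx)

lemma rayleighSup_smul {c : ℝ} (hc : 0 ≤ c) (A M : Matrix (Fin n) (Fin n) ℝ)
    (U : Submodule ℝ (Fin n → ℝ)) : rayleighSup (c • A) M U = c * rayleighSup A M U := by
  have : {q | ∃ x ∈ U, x ≠ 0 ∧ q = rayleigh (c • A) M x} =
      c • {q | ∃ x ∈ U, x ≠ 0 ∧ q = rayleigh A M x} := by
    ext
    simp [Set.mem_smul_set, rayleigh_smul_left, eq_comm, and_assoc]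
  rw [rayleighSup, this, Real.sSup_smul_of_nonneg hc, smul_eq_mul, rayleighSup]

lemma lamMinMax_smul {c : ℝ} (hc : 0 ≤ c) (A M : Matrix (Fin n) (Fin n) ℝ) (j : ℕ) :
    lamMinMax (c • A) M j = c * lamMinMax A M j := by
  have : {r | ∃ U : Submodule ℝ (Fin n → ℝ), Module.finrank ℝ U = j ∧
        r = rayleighSup (c • A) M U} =
      c • {r | ∃ U : Submodule ℝ (Fin n → ℝ), Module.finrank ℝ U = j ∧ r = rayleighSup A M U} := by
    ext
    simp [Set.mem_smul_set, rayleighSup_smul hc, eq_comm]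
  rw [lamMinMax_eq_sInf_rayleighSup, this, Real.sInf_smul_of_nonneg hc, smul_eq_mul,
    lamMinMax_eq_sInf_rayleighSup]

lemma mul_lamMinMax_le_and_le_mul {B : Matrix (Fin n) (Fin n) ℝ} (hM : M.PosDef) {α β : ℝ}
    (hα : 0 ≤ α) (hβ : 0 ≤ β)
    (h : ∀ v, α * (v ⬝ᵥ B *ᵥ v) ≤ v ⬝ᵥ A *ᵥ v ∧ v ⬝ᵥ A *ᵥ v ≤ β * (v ⬝ᵥ B *ᵥ v)) {j : ℕ}
    (hj1 : 1 ≤ j) (hjn : j ≤ n) :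
    α * lamMinMax B M j ≤ lamMinMax A M j ∧ lamMinMax A M j ≤ β * lamMinMax B M j := by
  rw [← lamMinMax_smul hα, ← lamMinMax_smul hβ]
  exact ⟨lamMinMax_mono hM (fun v => by simpa [smul_mulVec] using (h v).1) hj1 hjn,
    lamMinMax_mono hM (fun v => by simpa [smul_mulVec] using (h v).2) hj1 hjn⟩

lemma le_relativeGap_of_bounds {α β a b a' b' : ℝ} (hα : 0 < α) (hβ : 0 < β) (ha : 0 < a)
    (hb : 0 ≤ b) (ha'lo : α * a ≤ a') (ha'hi : a' ≤ β * a) (hb' : α * b ≤ b') :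
    (α * ((b - a) / a) + (α - β)) / β ≤ (b' - a') / a' := by
  have ha' : 0 < a' := (mul_pos hα ha).trans_le ha'lo
  rw [div_le_div_iff₀ hβ ha']
  field_simp
  nlinarith [mul_le_mul_of_nonneg_left ha'hi (mul_nonneg hα.le hb),
    mul_le_mul_of_nonneg_left hb' hβ.le]

end MinMax

theorem stmt_6_general {n d : ℕ} (S : Set (Fin d → ℝ)) (M Abar : Matrix (Fin n) (Fin n) ℝ)
    (hM : M.PosDef) (hAbar : Abar.PosDef)
    (A : (Fin d → ℝ) → Matrix (Fin n) (Fin n) ℝ)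
    (α β : ℝ) (hα : 0 < α) (hαβ : α ≤ β)
    (hspec : ∀ σ ∈ S, ∀ v : Fin n → ℝ,
      α * (v ⬝ᵥ Abar.mulVec v) ≤ v ⬝ᵥ (A σ).mulVec v ∧
        v ⬝ᵥ (A σ).mulVec v ≤ β * (v ⬝ᵥ Abar.mulVec v))
    (i : ℕ) (hi1 : 1 ≤ i) (hin : i + 1 ≤ n)
    (δ₀ : ℝ)
    (hδ₀def : δ₀ = (lamMinMax Abar M (i + 1) - lamMinMax Abar M i) / lamMinMax Abar M i)
    (hδ₀ : δ₀ > (β - α) / α) :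
    (α * δ₀ + (α - β)) / β > 0 ∧
      ∀ σ ∈ S,
        (lamMinMax (A σ) M (i + 1) - lamMinMax (A σ) M i) / lamMinMax (A σ) M i ≥
          (α * δ₀ + (α - β)) / β := by
  have hβ : 0 < β := hα.trans_le hαβ
  refine ⟨div_pos ?_ hβ, fun σ hσ => ?_⟩
  · linarith [(div_lt_iff₀ hα).mp hδ₀]
  obtain ⟨hlo, hhi⟩ := mul_lamMinMax_le_and_le_mul hM hα.le hβ.le (hspec σ hσ) hi1 (by omega)
  obtain ⟨hlo', -⟩ := mul_lamMinMax_le_and_le_mul hM hα.le hβ.le (hspec σ hσ) (by omega) hin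
  rw [hδ₀def]
  exact le_relativeGap_of_bounds hα hβ (lamMinMax_pos hAbar hM hi1 (by omega))
    (lamMinMax_pos hAbar hM (by omega) hin).le hlo hhi hlo'

/-- gap stability.  With `δ₀ = (λ_{i+1}(Ā,M) - λ_i(Ā,M))/λ_i(Ā,M)`,
if `δ₀ > (β - α)/α` then `δ = (α δ₀ + (α - β))/β > 0` and for all `σ ∈ S`,
`(λ_{i+1}(A(σ),M) - λ_i(A(σ),M))/λ_i(A(σ),M) ≥ δ`. -/
theorem stmt_6 {n d : ℕ} (S : Set (Fin d → ℝ)) (M Abar : Matrix (Fin n) (Fin n) ℝ)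
    (hM : M.PosDef) (hAbar : Abar.PosDef)
    (A : (Fin d → ℝ) → Matrix (Fin n) (Fin n) ℝ) (hApd : ∀ σ ∈ S, (A σ).PosDef)
    (α β : ℝ) (hα : 0 < α) (hαβ : α ≤ β)
    (hspec : ∀ σ ∈ S, ∀ v : Fin n → ℝ,
      α * (v ⬝ᵥ Abar.mulVec v) ≤ v ⬝ᵥ (A σ).mulVec v ∧
        v ⬝ᵥ (A σ).mulVec v ≤ β * (v ⬝ᵥ Abar.mulVec v))
    (i : ℕ) (hi1 : 1 ≤ i) (hin : i + 1 ≤ n)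
    (δ₀ : ℝ)
    (hδ₀def : δ₀ = (lamMinMax Abar M (i + 1) - lamMinMax Abar M i) / lamMinMax Abar M i)
    (hδ₀ : δ₀ > (β - α) / α) :
    (α * δ₀ + (α - β)) / β > 0 ∧
      ∀ σ ∈ S,
        (lamMinMax (A σ) M (i + 1) - lamMinMax (A σ) M i) / lamMinMax (A σ) M i ≥
          (α * δ₀ + (α - β)) / β :=
  stmt_6_general S M Abar hM hAbar A α β hα hαβ hspec i hi1 hin δ₀ hδ₀def hδ₀
end

section
/- Assume A : S → ℝ^{n×n} is spectrally equivalent to Ā with constants 0 < α ≤ β, and assume ρ > 1 and αρ > 1. Then for every σ ∈ S and every t ∈ (0, Λ), the matrix W_⊥ᵀ(A(σ) − tM)W_⊥ is symmetric positive definite; indeed every nonzero w ∈ Ē⊥ satisfies wᵀ A(σ) w − t wᵀ M w ≥ (αρΛ − t)‖w‖_M² > 0. -/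
/-! Conjugating by `L = M^{1/2}` turns the pencil `(Ā, M)` into the symmetric matrix
`B = L⁻¹ Ā L⁻¹`: `Be = μe` iff `Ā(L⁻¹e) = μ M(L⁻¹e)`. If `w` is `Ā`-orthogonal to `Ē`, then
`Lw` is orthogonal to every eigenvector of `B` with eigenvalue below `ρΛ`, so expanding `Lw` in
an orthonormal eigenbasis of `B` gives `wᵀĀw ≥ ρΛ ‖w‖_M²`. Spectral equivalence upgrades this to
`wᵀA(σ)w ≥ αρΛ ‖w‖_M²`, and `αρΛ > Λ > t` makes `A(σ) - tM` positive on `Ē⊥`, which contains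
the range of `W⊥`. -/

open Matrix
open scoped MatrixOrder

/-- `Ē`, the span of all eigenvectors `v` of the pencil `(Ā, M)` (`Āv = ξMv`)
with eigenvalue `ξ ∈ (0, c)`. -/
noncomputable def Ebar {n : ℕ} (Abar M : Matrix (Fin n) (Fin n) ℝ) (c : ℝ) :
    Submodule ℝ (Fin n → ℝ) :=
  Submodule.span ℝ {v : Fin n → ℝ |
    v ≠ 0 ∧ ∃ ξ : ℝ, 0 < ξ ∧ ξ < c ∧ Abar.mulVec v = ξ • M.mulVec v}

theorem Matrix.IsSymm.dotProduct_mulVec_comm {ι : Type*} [Fintype ι] {P : Matrix ι ι ℝ}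
    (hP : P.IsSymm) (a b : ι → ℝ) : a ⬝ᵥ P *ᵥ b = P *ᵥ a ⬝ᵥ b := by
  rw [dotProduct_mulVec, ← mulVec_transpose, hP.eq]

theorem Matrix.mulVec_dotProduct_eq_zero_of_forall_col {R ι κ : Type*} [CommSemiring R]
    [Fintype ι] [Fintype κ] {W : Matrix ι κ R} {a : ι → R}
    (h : ∀ j, (fun i => W i j) ⬝ᵥ a = 0) (c : κ → R) : W *ᵥ c ⬝ᵥ a = 0 := by
  have : a ᵥ* W = 0 := funext fun j => (dotProduct_comm _ _).trans (h j)
  rw [dotProduct_comm, dotProduct_mulVec, this, zero_dotProduct]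

theorem Matrix.posDef_transpose_mul_mul_of_pos {ι κ : Type*} [Fintype ι] [Fintype κ]
    {C : Matrix ι ι ℝ} (hC : C.IsSymm) (W : Matrix ι κ ℝ)
    (h : ∀ c ≠ 0, 0 < W *ᵥ c ⬝ᵥ C *ᵥ (W *ᵥ c)) : (Wᵀ * C * W).PosDef := by
  refine PosDef.of_dotProduct_mulVec_pos ?_ fun c hc => ?_
  · simpa using isHermitian_conjTranspose_mul_mul W (isHermitian_iff_isSymm.mpr hC)
  · simpa [← mulVec_mulVec, dotProduct_mulVec, vecMul_transpose] using h c hc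

theorem Matrix.IsHermitian.mul_dotProduct_self_le_of_orthogonal {ι : Type*} [Fintype ι]
    [DecidableEq ι] {B : Matrix ι ι ℝ} (hB : B.IsHermitian) {c : ℝ} {x : ι → ℝ}
    (hx : ∀ i, hB.eigenvalues i < c → ⇑(hB.eigenvectorBasis i) ⬝ᵥ x = 0) :
    c * (x ⬝ᵥ x) ≤ x ⬝ᵥ B *ᵥ x := by
  set μ := hB.eigenvalues
  set U : Matrix ι ι ℝ := (hB.eigenvectorUnitary : Matrix ι ι ℝ)
  set y := Uᵀ *ᵥ x
  have hy : ∀ i, y i = ⇑(hB.eigenvectorBasis i) ⬝ᵥ x := fun i => rfl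
  have hUU : U * Uᵀ = 1 := Unitary.mul_star_self_of_mem hB.eigenvectorUnitary.2
  have hB' : B = U * diagonal μ * Uᵀ := by
    simpa [Unitary.conjStarAlgAut_apply, star_eq_conjTranspose] using hB.spectral_theorem
  have hquad : x ⬝ᵥ B *ᵥ x = ∑ i, μ i * y i ^ 2 := by
    rw [hB', ← mulVec_mulVec, ← mulVec_mulVec, dotProduct_mulVec, ← mulVec_transpose]
    simp [dotProduct, mulVec_diagonal, y, sq, mul_left_comm]
  have hnorm : x ⬝ᵥ x = ∑ i, y i ^ 2 := by
    have : y ⬝ᵥ y = x ⬝ᵥ x := by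
      rw [dotProduct_mulVec, ← mulVec_transpose, transpose_transpose, mulVec_mulVec, hUU,
        one_mulVec]
    rw [← this]
    simp [dotProduct, sq]
  rw [hquad, hnorm, Finset.mul_sum]
  refine Finset.sum_le_sum fun i _ => ?_
  rcases lt_or_ge (μ i) c with h | h
  · simp [hy, hx i h]
  · exact mul_le_mul_of_nonneg_right h (sq_nonneg _)

theorem mul_dotProduct_mulVec_le_of_orthogonal_Ebar {n : ℕ} {M Abar : Matrix (Fin n) (Fin n) ℝ}
    (hM : M.PosDef) (hAbar : Abar.PosDef) {c : ℝ} {w : Fin n → ℝ}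
    (hw : ∀ u ∈ Ebar Abar M c, w ⬝ᵥ Abar *ᵥ u = 0) :
    c * (w ⬝ᵥ M *ᵥ w) ≤ w ⬝ᵥ Abar *ᵥ w := by
  set L := CFC.sqrt M
  have hL : L.PosDef := (IsStrictlyPositive.sqrt M hM.isStrictlyPositive).posDef
  have hLsymm : L.IsSymm := isHermitian_iff_isSymm.mp hL.isHermitian
  have hLL : L * L = M := CFC.sqrt_mul_sqrt_self M hM.posSemidef.nonneg
  have hLunit : IsUnit L.det := (isUnit_iff_isUnit_det L).mp hL.isUnit
  set B := L⁻¹ * Abar * L⁻¹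
  have hB : B.PosDef := by
    have h := (IsUnit.posDef_star_left_conjugate_iff hL.inv.isUnit).mpr hAbar
    rwa [star_eq_conjTranspose, hL.inv.isHermitian.eq] at h
  have hAbarB : Abar = L * B * L := by
    rw [show L * B * L = (L * L⁻¹) * Abar * (L⁻¹ * L) by simp only [B, Matrix.mul_assoc],
      mul_nonsing_inv L hLunit, nonsing_inv_mul L hLunit, Matrix.one_mul, Matrix.mul_one]
  have hquad : w ⬝ᵥ Abar *ᵥ w = L *ᵥ w ⬝ᵥ B *ᵥ (L *ᵥ w) := by
    rw [hAbarB, ← mulVec_mulVec, ← mulVec_mulVec, hLsymm.dotProduct_mulVec_comm]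
  have hnorm : w ⬝ᵥ M *ᵥ w = L *ᵥ w ⬝ᵥ L *ᵥ w := by
    rw [← hLL, ← mulVec_mulVec, hLsymm.dotProduct_mulVec_comm]
  rw [hquad, hnorm]
  refine hB.isHermitian.mul_dotProduct_self_le_of_orthogonal fun i hi => ?_
  set e := ⇑(hB.isHermitian.eigenvectorBasis i)
  set μ := hB.isHermitian.eigenvalues i
  set v := L⁻¹ *ᵥ e
  have hLv : L *ᵥ v = e := by rw [mulVec_mulVec, mul_nonsing_inv L hLunit, one_mulVec]
  have hMv : M *ᵥ v = L *ᵥ e := by rw [← hLL, ← mulVec_mulVec, hLv]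
  have hAv : Abar *ᵥ v = μ • M *ᵥ v := by
    rw [hAbarB, ← mulVec_mulVec, ← mulVec_mulVec, hLv, hB.isHermitian.mulVec_eigenvectorBasis,
      mulVec_smul, hMv]
  have hv : v ∈ Ebar Abar M c := by
    refine Submodule.subset_span ⟨fun hv0 => ?_, μ, hB.eigenvalues_pos i, hi, hAv⟩
    apply hB.isHermitian.eigenvectorBasis.orthonormal.ne_zero i
    simpa [hv0, e] using hLv.symm
  have := hw v hv
  rw [hAv, hMv, dotProduct_smul, smul_eq_mul, hLsymm.dotProduct_mulVec_comm] at this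
  rw [dotProduct_comm]
  exact (mul_eq_zero.mp this).resolve_left (hB.eigenvalues_pos i).ne'

theorem stmt_7_general {n m d : ℕ} (S : Set (Fin d → ℝ)) (M Abar : Matrix (Fin n) (Fin n) ℝ)
    (hM : M.PosDef) (hAbar : Abar.PosDef)
    (A : (Fin d → ℝ) → Matrix (Fin n) (Fin n) ℝ) (hApd : ∀ σ ∈ S, (A σ).PosDef)
    (α β Λ ρ : ℝ) (hα : 0 < α) (hΛ : 0 < Λ) (hαρ : 1 < α * ρ)
    (hspec : ∀ σ ∈ S, ∀ v : Fin n → ℝ,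
      α * (v ⬝ᵥ Abar.mulVec v) ≤ v ⬝ᵥ (A σ).mulVec v ∧
        v ⬝ᵥ (A σ).mulVec v ≤ β * (v ⬝ᵥ Abar.mulVec v))
    (Wperp : Matrix (Fin n) (Fin m) ℝ)
    -- the columns of `W⊥` lie in `Ē⊥` (the `Ā`-orthocomplement of `Ē`):
    (hWmem : ∀ j, ∀ w ∈ Ebar Abar M (ρ * Λ), (fun i => Wperp i j) ⬝ᵥ Abar.mulVec w = 0)
    -- the columns of `W⊥` are linearly independent:
    (hWli : ∀ c : Fin m → ℝ, Wperp.mulVec c = 0 → c = 0)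
    (σ : Fin d → ℝ) (hσ : σ ∈ S) (t : ℝ) (ht : t ∈ Set.Ioo 0 Λ) :
    (Wperpᵀ * (A σ - t • M) * Wperp).PosDef ∧
      ∀ w : Fin n → ℝ, (∀ u ∈ Ebar Abar M (ρ * Λ), w ⬝ᵥ Abar.mulVec u = 0) → w ≠ 0 →
        (α * ρ * Λ - t) * (w ⬝ᵥ M.mulVec w) ≤
            w ⬝ᵥ (A σ).mulVec w - t * (w ⬝ᵥ M.mulVec w) ∧
          0 < (α * ρ * Λ - t) * (w ⬝ᵥ M.mulVec w) := by
  have hshifted : ∀ w : Fin n → ℝ, (∀ u ∈ Ebar Abar M (ρ * Λ), w ⬝ᵥ Abar.mulVec u = 0) →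
      w ≠ 0 → (α * ρ * Λ - t) * (w ⬝ᵥ M.mulVec w) ≤
          w ⬝ᵥ (A σ).mulVec w - t * (w ⬝ᵥ M.mulVec w) ∧
        0 < (α * ρ * Λ - t) * (w ⬝ᵥ M.mulVec w) := by
    intro w hw hw0
    have hMw : 0 < w ⬝ᵥ M *ᵥ w := by simpa using hM.dotProduct_mulVec_pos hw0
    have hAbarw := mul_dotProduct_mulVec_le_of_orthogonal_Ebar hM hAbar hw
    have hAw := (hspec σ hσ w).1
    have hgap : 0 < α * ρ * Λ - t := by nlinarith [ht.2]
    exact ⟨by nlinarith, mul_pos hgap hMw⟩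
  have hsymm : (A σ - t • M).IsSymm :=
    (isHermitian_iff_isSymm.mp (hApd σ hσ).isHermitian).sub
      ((isHermitian_iff_isSymm.mp hM.isHermitian).smul t)
  refine ⟨posDef_transpose_mul_mul_of_pos hsymm Wperp fun c hc => ?_, hshifted⟩
  have hWc : Wperp *ᵥ c ≠ 0 := fun h => hc (hWli c h)
  obtain ⟨hlower, hpos⟩ := hshifted _
    (fun u hu => mulVec_dotProduct_eq_zero_of_forall_col (fun j => hWmem j u hu) c) hWc
  rw [sub_mulVec, smul_mulVec, dotProduct_sub, dotProduct_smul, smul_eq_mul]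
  linarith

/-- for `σ ∈ S` and `t ∈ (0,Λ)`, the matrix `W⊥ᵀ(A(σ) - tM)W⊥` is
symmetric positive definite; indeed every nonzero `w ∈ Ē⊥` satisfies
`wᵀA(σ)w - t wᵀMw ≥ (αρΛ - t)‖w‖_M² > 0`. -/
theorem stmt_7 {n m d : ℕ} (S : Set (Fin d → ℝ)) (M Abar : Matrix (Fin n) (Fin n) ℝ)
    (hM : M.PosDef) (hAbar : Abar.PosDef)
    (A : (Fin d → ℝ) → Matrix (Fin n) (Fin n) ℝ) (hApd : ∀ σ ∈ S, (A σ).PosDef)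
    (α β Λ ρ : ℝ) (hα : 0 < α) (hαβ : α ≤ β) (hΛ : 0 < Λ) (hρ : 1 < ρ) (hαρ : 1 < α * ρ)
    (hspec : ∀ σ ∈ S, ∀ v : Fin n → ℝ,
      α * (v ⬝ᵥ Abar.mulVec v) ≤ v ⬝ᵥ (A σ).mulVec v ∧
        v ⬝ᵥ (A σ).mulVec v ≤ β * (v ⬝ᵥ Abar.mulVec v))
    (Wperp : Matrix (Fin n) (Fin m) ℝ)
    -- the columns of `W⊥` lie in `Ē⊥` (the `Ā`-orthocomplement of `Ē`):
    (hWmem : ∀ j, ∀ w ∈ Ebar Abar M (ρ * Λ), (fun i => Wperp i j) ⬝ᵥ Abar.mulVec w = 0)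
    -- the columns of `W⊥` span `Ē⊥`:
    (hWspan : ∀ v : Fin n → ℝ,
      (∀ w ∈ Ebar Abar M (ρ * Λ), v ⬝ᵥ Abar.mulVec w = 0) → ∃ c, v = Wperp.mulVec c)
    -- the columns of `W⊥` are linearly independent:
    (hWli : ∀ c : Fin m → ℝ, Wperp.mulVec c = 0 → c = 0)
    (σ : Fin d → ℝ) (hσ : σ ∈ S) (t : ℝ) (ht : t ∈ Set.Ioo 0 Λ) :
    (Wperpᵀ * (A σ - t • M) * Wperp).PosDef ∧
      ∀ w : Fin n → ℝ, (∀ u ∈ Ebar Abar M (ρ * Λ), w ⬝ᵥ Abar.mulVec u = 0) → w ≠ 0 →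
        (α * ρ * Λ - t) * (w ⬝ᵥ M.mulVec w) ≤
            w ⬝ᵥ (A σ).mulVec w - t * (w ⬝ᵥ M.mulVec w) ∧
          0 < (α * ρ * Λ - t) * (w ⬝ᵥ M.mulVec w) :=
  stmt_7_general S M Abar hM hAbar A hApd α β Λ ρ hα hΛ hαρ hspec Wperp hWmem hWli σ hσ t ht
end

section
/- Assume A : S → ℝ^{n×n} is spectrally equivalent to Ā with constants 0 < α ≤ β, ρ > 1 and αρ > 1. Let σ ∈ S, t ∈ (0, Λ), and let (ξ_k, u_k), k = 1, …, m, be eigenpairs of the pencil (A_⊥(σ), M_⊥), i.e. A_⊥(σ) u_k = ξ_k M_⊥ u_k, with (u_k) M_⊥-orthonormal (u_jᵀ M_⊥ u_k = δ_{jk}). Then ξ_k ≥ αρΛ > Λ for all k, and for every y ∈ Ē, Z(σ, t) y = W_⊥ ( Σ_{k=1}^m (ξ_k − t)⁻¹ u_k u_kᵀ ) W_⊥ᵀ A(σ) y. -/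
/-!
Let `v = W⊥ u_k`. It is `Ā`-orthogonal to `Ē`; expanding `M^{1/2} v` in an orthonormal eigenbasis
of `M^{-1/2} Ā M^{-1/2}`, only eigenvalues `≥ ρΛ` contribute, so `vᵀĀv ≥ ρΛ vᵀMv = ρΛ`, and spectral
equivalence gives `ξ_k = vᵀA(σ)v ≥ αρΛ > Λ > t`. The `u_k` are then `M⊥`-orthonormal eigenvectors
of `W⊥ᵀ(A(σ) - tM)W⊥` with nonzero eigenvalues `ξ_k - t`, which yields the spectral formula for its
inverse, and `W⊥ᵀĀy = 0` for `y ∈ Ē` removes `Ā` from `δA(σ) y`.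
-/

open Matrix

/-- The correction operator
`Z(σ,t) = W⊥ (W⊥ᵀ (A(σ) - tM) W⊥)⁻¹ W⊥ᵀ (A(σ) - Ā)`. -/
noncomputable def Zop {n m : ℕ} (Abar M : Matrix (Fin n) (Fin n) ℝ)
    (Wperp : Matrix (Fin n) (Fin m) ℝ) (Aσ : Matrix (Fin n) (Fin n) ℝ) (t : ℝ) :
    Matrix (Fin n) (Fin n) ℝ :=
  Wperp * (Wperpᵀ * (Aσ - t • M) * Wperp)⁻¹ * Wperpᵀ * (Aσ - Abar)

section

variable {ι : Type*} [Fintype ι]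

lemma Matrix.IsSymm.dotProduct_mulVec_comm_s15 {C : Matrix ι ι ℝ} (hC : C.IsSymm) (x y : ι → ℝ) :
    x ⬝ᵥ C *ᵥ y = (C *ᵥ x) ⬝ᵥ y := by
  rw [dotProduct_mulVec, ← mulVec_transpose, hC.eq]

lemma Matrix.PosDef.pos_of_mulVec_eq_smul_mulVec {A M : Matrix ι ι ℝ} (hA : A.PosDef)
    (hM : M.PosSemidef) {w : ι → ℝ} (hw : w ≠ 0) {ξ : ℝ} (h : A *ᵥ w = ξ • M *ᵥ w) : 0 < ξ := by
  have hpos := hA.dotProduct_mulVec_pos hw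
  rw [star_trivial, h, dotProduct_smul, smul_eq_mul] at hpos
  exact pos_of_mul_pos_left hpos (by simpa using hM.dotProduct_mulVec_nonneg w)

lemma Matrix.IsHermitian.mul_dotProduct_self_le_of_forall_eigenvalues_lt [DecidableEq ι]
    {C : Matrix ι ι ℝ} (hC : C.IsHermitian) {c : ℝ} {z : ι → ℝ}
    (hz : ∀ i, hC.eigenvalues i < c → z ⬝ᵥ hC.eigenvectorBasis i = 0) :
    c * (z ⬝ᵥ z) ≤ z ⬝ᵥ C *ᵥ z := by
  set b := hC.eigenvectorBasis
  have hexpand (y : ι → ℝ) : z ⬝ᵥ y = ∑ i, (z ⬝ᵥ b i) * (y ⬝ᵥ b i) := by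
    have := b.sum_inner_mul_inner (WithLp.toLp 2 z) (WithLp.toLp 2 y)
    simp only [EuclideanSpace.inner_eq_star_dotProduct, star_trivial] at this
    rw [dotProduct_comm, ← this]
    exact Finset.sum_congr rfl fun i _ => by rw [dotProduct_comm (b i)]
  have hCb (i : ι) : C *ᵥ z ⬝ᵥ b i = hC.eigenvalues i * (z ⬝ᵥ b i) := by
    rw [dotProduct_comm, (isHermitian_iff_isSymm.mp hC).dotProduct_mulVec_comm_s15,
      hC.mulVec_eigenvectorBasis, smul_dotProduct, smul_eq_mul, dotProduct_comm]
  rw [hexpand, hexpand, Finset.mul_sum]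
  refine Finset.sum_le_sum fun i _ => ?_
  rw [hCb]
  rcases lt_or_ge (hC.eigenvalues i) c with hlt | hge
  · simp [hz i hlt]
  · nlinarith [mul_self_nonneg (z ⬝ᵥ b i)]

variable [DecidableEq ι] {K : Type*}

lemma Matrix.mul_sum_vecMulVec_eq_one [CommRing K] {G : Matrix ι ι K} {u : ι → ι → K}
    (horth : ∀ j k, u j ⬝ᵥ G *ᵥ u k = if j = k then 1 else 0) :
    G * ∑ k, vecMulVec (u k) (u k) = 1 := by
  -- `horth` says `U * G * Uᵀ = 1` for the matrix `U` with rows `u k`; flip the one-sided inverse.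
  have hU : of u * (G * (of u)ᵀ) = 1 := by
    ext j k
    simpa [Matrix.mul_apply, mulVec, dotProduct, Finset.mul_sum, one_apply] using horth j k
  have hsum : ∑ k, vecMulVec (u k) (u k) = (of u)ᵀ * of u := by
    ext i j
    simp [vecMulVec_apply, Matrix.mul_apply, Matrix.sum_apply]
  rw [hsum, ← Matrix.mul_assoc]
  exact mul_eq_one_comm.mp hU

lemma Matrix.inv_eq_sum_inv_smul_vecMulVec [Field K] {P G : Matrix ι ι K} {ξ : ι → K}
    {u : ι → ι → K} (heig : ∀ k, P *ᵥ u k = ξ k • G *ᵥ u k)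
    (horth : ∀ j k, u j ⬝ᵥ G *ᵥ u k = if j = k then 1 else 0) (hξ : ∀ k, ξ k ≠ 0) :
    P⁻¹ = ∑ k, (ξ k)⁻¹ • vecMulVec (u k) (u k) := by
  refine inv_eq_right_inv ?_
  rw [← mul_sum_vecMulVec_eq_one horth, Finset.mul_sum, Finset.mul_sum]
  refine Finset.sum_congr rfl fun k _ => ?_
  rw [Matrix.mul_smul, mul_vecMulVec, mul_vecMulVec, heig, smul_vecMulVec, smul_smul,
    inv_mul_cancel₀ (hξ k), one_smul]

end

lemma Matrix.dotProduct_transpose_mul_mul_mulVec {l m R : Type*} [Fintype l] [Fintype m]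
    [CommSemiring R] (W : Matrix l m R) (B : Matrix l l R) (x y : m → R) :
    x ⬝ᵥ (Wᵀ * B * W) *ᵥ y = (W *ᵥ x) ⬝ᵥ B *ᵥ (W *ᵥ y) := by
  rw [← mulVec_mulVec, ← mulVec_mulVec, dotProduct_mulVec, vecMul_transpose]

open scoped MatrixOrder in
lemma mul_dotProduct_mulVec_le_of_forall_mem_Ebar {n : ℕ} {M Abar : Matrix (Fin n) (Fin n) ℝ}
    (hM : M.PosDef) (hAbar : Abar.PosDef) {c : ℝ} {v : Fin n → ℝ}
    (hv : ∀ w ∈ Ebar Abar M c, v ⬝ᵥ Abar *ᵥ w = 0) :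
    c * (v ⬝ᵥ M *ᵥ v) ≤ v ⬝ᵥ Abar *ᵥ v := by
  set S := CFC.sqrt M
  have hSS : S * S = M := CFC.sqrt_mul_sqrt_self M hM.posSemidef.nonneg
  have hS : S.IsSymm := isHermitian_iff_isSymm.mp (CFC.sqrt_nonneg M).posSemidef.isHermitian
  have hSdet : IsUnit S.det :=
    (isUnit_iff_isUnit_det S).mp ((CFC.isUnit_sqrt_iff M hM.posSemidef.nonneg).mpr hM.isUnit)
  have hSinv : S * S⁻¹ = 1 := mul_nonsing_inv S hSdet
  set C := S⁻¹ * Abar * S⁻¹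
  have hC : C.IsHermitian := isHermitian_iff_isSymm.mpr <| by
    rw [IsSymm, transpose_mul, transpose_mul, hS.inv.eq,
      (isHermitian_iff_isSymm.mp hAbar.isHermitian).eq]
    exact (Matrix.mul_assoc _ _ _).symm
  have hAbar_eq : Abar = S * C * S := by
    simp only [C, ← Matrix.mul_assoc, hSinv, Matrix.one_mul]
    rw [Matrix.mul_assoc, nonsing_inv_mul S hSdet, Matrix.mul_one]
  have key := hC.mul_dotProduct_self_le_of_forall_eigenvalues_lt (c := c) (z := S *ᵥ v) ?_
  · rwa [← hS.dotProduct_mulVec_comm_s15, mulVec_mulVec, hSS, ← hS.dotProduct_mulVec_comm_s15,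
      mulVec_mulVec, mulVec_mulVec, ← hAbar_eq] at key
  intro i hi
  set e : Fin n → ℝ := (hC.eigenvectorBasis i).ofLp
  set w := S⁻¹ *ᵥ e
  have hSw : S *ᵥ w = e := by rw [mulVec_mulVec, hSinv, one_mulVec]
  have hw : w ≠ 0 := fun h => hC.eigenvectorBasis.orthonormal.ne_zero i <| by
    rw [← WithLp.ofLp_eq_zero]
    change e = 0
    rw [← hSw, h, mulVec_zero]
  have hMw : M *ᵥ w = S *ᵥ e := by rw [← hSS, ← mulVec_mulVec, hSw]
  have hAw : Abar *ᵥ w = hC.eigenvalues i • M *ᵥ w := by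
    rw [hMw, hAbar_eq, ← mulVec_mulVec, ← mulVec_mulVec, hSw, hC.mulVec_eigenvectorBasis,
      mulVec_smul]
  have hμ := hAbar.pos_of_mulVec_eq_smul_mulVec hM.posSemidef hw hAw
  have hvw := hv w (Submodule.subset_span ⟨hw, _, hμ, hi, hAw⟩)
  rw [hAw, hMw, dotProduct_smul, smul_eq_mul, hS.dotProduct_mulVec_comm_s15] at hvw
  exact (mul_eq_zero.mp hvw).resolve_left hμ.ne'

theorem stmt_15_general {n m d : ℕ} (S : Set (Fin d → ℝ)) (M Abar : Matrix (Fin n) (Fin n) ℝ)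
    (hM : M.PosDef) (hAbar : Abar.PosDef)
    (A : (Fin d → ℝ) → Matrix (Fin n) (Fin n) ℝ)
    (α β Λ ρ : ℝ) (hα : 0 < α) (hΛ : 0 < Λ) (hαρ : 1 < α * ρ)
    (hspec : ∀ σ ∈ S, ∀ v : Fin n → ℝ,
      α * (v ⬝ᵥ Abar.mulVec v) ≤ v ⬝ᵥ (A σ).mulVec v ∧
        v ⬝ᵥ (A σ).mulVec v ≤ β * (v ⬝ᵥ Abar.mulVec v))
    (Wperp : Matrix (Fin n) (Fin m) ℝ)
    (hWmem : ∀ j, ∀ w ∈ Ebar Abar M (ρ * Λ), (fun i => Wperp i j) ⬝ᵥ Abar.mulVec w = 0)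
    (σ : Fin d → ℝ) (hσ : σ ∈ S) (t : ℝ) (ht : t ∈ Set.Ioo 0 Λ)
    (ξ : Fin m → ℝ) (u : Fin m → (Fin m → ℝ))
    (heig : ∀ k, (Wperpᵀ * A σ * Wperp).mulVec (u k) =
      ξ k • (Wperpᵀ * M * Wperp).mulVec (u k))
    (horth : ∀ j k, u j ⬝ᵥ (Wperpᵀ * M * Wperp).mulVec (u k) =
      if j = k then (1 : ℝ) else 0) :
    (∀ k, α * ρ * Λ ≤ ξ k) ∧ Λ < α * ρ * Λ ∧
      ∀ y ∈ Ebar Abar M (ρ * Λ),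
        (Zop Abar M Wperp (A σ) t).mulVec y =
          Wperp.mulVec ((∑ k, (ξ k - t)⁻¹ • vecMulVec (u k) (u k)).mulVec
            (Wperpᵀ.mulVec ((A σ).mulVec y))) := by
  have hWAbar : ∀ w ∈ Ebar Abar M (ρ * Λ), Wperpᵀ *ᵥ (Abar *ᵥ w) = 0 :=
    fun w hw => funext fun j => hWmem j w hw
  have hξ (k : Fin m) : α * ρ * Λ ≤ ξ k := by
    have hMv := horth k k
    rw [if_pos rfl, dotProduct_transpose_mul_mul_mulVec] at hMv
    have hAv : ξ k = (Wperp *ᵥ u k) ⬝ᵥ A σ *ᵥ (Wperp *ᵥ u k) := by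
      rw [← dotProduct_transpose_mul_mul_mulVec, heig, dotProduct_smul, horth, if_pos rfl,
        smul_eq_mul, mul_one]
    have hAbarv := mul_dotProduct_mulVec_le_of_forall_mem_Ebar hM hAbar (v := Wperp *ᵥ u k)
      fun w hw => by rw [← vecMul_transpose, ← dotProduct_mulVec, hWAbar w hw, dotProduct_zero]
    rw [hMv, mul_one] at hAbarv
    calc α * ρ * Λ = α * (ρ * Λ) := mul_assoc _ _ _
      _ ≤ α * ((Wperp *ᵥ u k) ⬝ᵥ Abar *ᵥ (Wperp *ᵥ u k)) := by gcongr
      _ ≤ ξ k := hAv ▸ (hspec σ hσ _).1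
  refine ⟨hξ, lt_mul_left hΛ hαρ, fun y hy => ?_⟩
  have hinv : (Wperpᵀ * (A σ - t • M) * Wperp)⁻¹ =
      ∑ k, (ξ k - t)⁻¹ • vecMulVec (u k) (u k) := by
    refine inv_eq_sum_inv_smul_vecMulVec (fun k => ?_) horth
      fun k => sub_ne_zero.mpr (by linarith [hξ k, ht.2, lt_mul_left hΛ hαρ])
    rw [Matrix.mul_sub, Matrix.sub_mul, sub_mulVec, Matrix.mul_smul, Matrix.smul_mul, smul_mulVec,
      heig, sub_smul]
  rw [Zop, hinv, ← mulVec_mulVec, ← mulVec_mulVec, ← mulVec_mulVec, sub_mulVec, mulVec_sub,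
    hWAbar y hy, sub_zero]

/-- if `(ξ_k, u_k)` are `M⊥`-orthonormal eigenpairs of the pencil
`(A⊥(σ), M⊥)`, then `ξ_k ≥ αρΛ > Λ` for all `k`, and for every `y ∈ Ē`,
`Z(σ,t) y = W⊥ (Σ_k (ξ_k - t)⁻¹ u_k u_kᵀ) W⊥ᵀ A(σ) y`. -/
theorem stmt_15 {n m d : ℕ} (S : Set (Fin d → ℝ)) (M Abar : Matrix (Fin n) (Fin n) ℝ)
    (hM : M.PosDef) (hAbar : Abar.PosDef)
    (A : (Fin d → ℝ) → Matrix (Fin n) (Fin n) ℝ) (hApd : ∀ σ ∈ S, (A σ).PosDef)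
    (α β Λ ρ : ℝ) (hα : 0 < α) (hαβ : α ≤ β) (hΛ : 0 < Λ) (hρ : 1 < ρ) (hαρ : 1 < α * ρ)
    (hspec : ∀ σ ∈ S, ∀ v : Fin n → ℝ,
      α * (v ⬝ᵥ Abar.mulVec v) ≤ v ⬝ᵥ (A σ).mulVec v ∧
        v ⬝ᵥ (A σ).mulVec v ≤ β * (v ⬝ᵥ Abar.mulVec v))
    (Wperp : Matrix (Fin n) (Fin m) ℝ)
    (hWmem : ∀ j, ∀ w ∈ Ebar Abar M (ρ * Λ), (fun i => Wperp i j) ⬝ᵥ Abar.mulVec w = 0)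
    (hWspan : ∀ v : Fin n → ℝ,
      (∀ w ∈ Ebar Abar M (ρ * Λ), v ⬝ᵥ Abar.mulVec w = 0) → ∃ c, v = Wperp.mulVec c)
    (hWli : ∀ c : Fin m → ℝ, Wperp.mulVec c = 0 → c = 0)
    (σ : Fin d → ℝ) (hσ : σ ∈ S) (t : ℝ) (ht : t ∈ Set.Ioo 0 Λ)
    (ξ : Fin m → ℝ) (u : Fin m → (Fin m → ℝ))
    (heig : ∀ k, (Wperpᵀ * A σ * Wperp).mulVec (u k) =
      ξ k • (Wperpᵀ * M * Wperp).mulVec (u k))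
    (horth : ∀ j k, u j ⬝ᵥ (Wperpᵀ * M * Wperp).mulVec (u k) =
      if j = k then (1 : ℝ) else 0) :
    (∀ k, α * ρ * Λ ≤ ξ k) ∧ Λ < α * ρ * Λ ∧
      ∀ y ∈ Ebar Abar M (ρ * Λ),
        (Zop Abar M Wperp (A σ) t).mulVec y =
          Wperp.mulVec ((∑ k, (ξ k - t)⁻¹ • vecMulVec (u k) (u k)).mulVec
            (Wperpᵀ.mulVec ((A σ).mulVec y))) :=
  stmt_15_general S M Abar hM hAbar A α β Λ ρ hα hΛ hαρ hspec Wperp hWmem σ hσ t ht ξ u heig horth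
end
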